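/- Nyquist–Shannon reconstruction: if f : ℝ → ℝ is bandlimited, then for every x ∈ ℝ the family n ↦ f(n)·sinc(x − n) indexed by n ∈ ℤ is summable and f(x) = ∑_{n∈ℤ} f(n)·sinc(x − n). -/

import Mathlib

/-! The Fourier transform `g = 𝓕 f` is continuous and vanishes outside `[-1/2, 1/2]`, so Fourier
inversion gives `f y = ∫_{-1/2}^{1/2} g ξ e^{2πiξy} dξ`. Viewed on the circle `ℝ/ℤ`, this says that
`f n` is the conjugate of the `n`-th Fourier coefficient of `conj g`, while `sinc (x - n)` is the
`n`-th Fourier coefficient of `ξ ↦ e^{2πiξx}`. Parseval's identity for these two `L²` functions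
turns `∑ₙ f n · sinc (x - n)` into `∫_{-1/2}^{1/2} g ξ e^{2πiξx} dξ = f x`. -/

open MeasureTheory

/-- The sinc function: `sinc 0 = 1`, `sinc t = sin (π t) / (π t)` otherwise. -/
noncomputable def sinc (t : ℝ) : ℝ :=
  if t = 0 then 1 else Real.sin (Real.pi * t) / (Real.pi * t)

/-- `f : ℝ → ℝ` is bandlimited (to the band `[−1/2, 1/2]`) if it is continuous,
integrable, square-integrable, and its Fourier transform
`𝓕f(ξ) = ∫ f(x) e^{−2πi x ξ} dx` vanishes for `|ξ| > 1/2`. -/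
def Bandlimited (f : ℝ → ℝ) : Prop :=
  Continuous f ∧ Integrable f ∧ MemLp f 2 ∧
    ∀ ξ : ℝ, 1 / 2 < |ξ| →
      (∫ x : ℝ, (f x : ℂ) * Complex.exp (-2 * Real.pi * Complex.I * x * ξ)) = 0

open Complex Set
open Real hiding sinc
open scoped FourierTransform ComplexConjugate ENNReal

theorem hasSum_conj_fourierCoeff_mul_fourierCoeff {T : ℝ} [hT : Fact (0 < T)]
    (f g : Lp ℂ 2 (@AddCircle.haarAddCircle T hT)) :
    HasSum (fun i => conj (fourierCoeff f i) * fourierCoeff g i)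
      (∫ t, conj (f t) * g t ∂AddCircle.haarAddCircle) := by
  have h := fourierBasis.hasSum_inner_mul_inner f g
  rw [L2.inner_def f g] at h
  simp only [RCLike.inner_apply', ← inner_conj_symm f, ← fourierBasis.repr_apply_apply,
    fourierBasis_repr] at h
  exact h

theorem hasSum_conj_fourierCoeffOn_mul_fourierCoeffOn {a b : ℝ} {f g : ℝ → ℂ} (hab : a < b)
    (hf : MemLp f 2 (volume.restrict (Ioc a b))) (hg : MemLp g 2 (volume.restrict (Ioc a b))) :
    HasSum (fun i => conj (fourierCoeffOn hab f i) * fourierCoeffOn hab g i)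
      ((b - a)⁻¹ • ∫ x in a..b, conj (f x) * g x) := by
  have := Fact.mk (by linarith : 0 < b - a)
  rw [← add_sub_cancel a b] at hf hg
  have hf' := hf.memLp_liftIoc.haarAddCircle
  have hg' := hg.memLp_liftIoc.haarAddCircle
  convert hasSum_conj_fourierCoeff_mul_fourierCoeff hf'.toLp hg'.toLp using 1
  · simp [fourierCoeff_congr_ae hf'.coeFn_toLp, fourierCoeff_congr_ae hg'.coeFn_toLp,
      fourierCoeff_liftIoc_eq]
  · nth_rw 2 [← add_sub_cancel a b]
    rw [← AddCircle.integral_liftIoc_eq_intervalIntegral, ← AddCircle.integral_haarAddCircle]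
    apply integral_congr_ae
    filter_upwards [hf'.coeFn_toLp, hg'.coeFn_toLp] with x hfx hgx
    rw [hfx, hgx]
    rfl

theorem fourierCoeffOn_eq_integral_exp {a b : ℝ} (hab : a < b) (f : ℝ → ℂ) (n : ℤ) :
    fourierCoeffOn hab f n = (b - a)⁻¹ • ∫ x in a..b, cexp (-2 * π * I * n * x / ↑(b - a)) * f x := by
  rw [fourierCoeffOn_eq_integral, one_div]
  congr 1
  refine intervalIntegral.integral_congr fun x _ => ?_
  rw [fourier_coe_apply, smul_eq_mul]
  push_cast
  ring_nf

theorem conj_fourierCoeffOn_conj {a b : ℝ} (hab : a < b) (g : ℝ → ℂ) (n : ℤ) :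
    conj (fourierCoeffOn hab (fun x => conj (g x)) n) =
      (b - a)⁻¹ • ∫ x in a..b, cexp (2 * π * I * n * x / ↑(b - a)) * g x := by
  rw [fourierCoeffOn_eq_integral_exp, real_smul, real_smul, map_mul, conj_ofReal,
    ← intervalIntegral.intervalIntegral_conj]
  congr 1
  refine intervalIntegral.integral_congr fun x _ => ?_
  rw [map_mul, conj_conj, ← exp_conj]
  congr 2
  simp only [map_div₀, map_mul, map_neg, map_ofNat, conj_ofReal, conj_I, map_intCast]
  ring

theorem Continuous.memLp_restrict_Ioc {E : Type*} [NormedAddCommGroup E] {f : ℝ → E}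
    (hf : Continuous f) (p : ℝ≥0∞) (a b : ℝ) : MemLp f p (volume.restrict (Ioc a b)) := by
  obtain ⟨C, hC⟩ := (isCompact_Icc (a := a) (b := b)).exists_bound_of_continuousOn hf.continuousOn
  exact MemLp.of_bound hf.aestronglyMeasurable C
    ((ae_restrict_iff' measurableSet_Ioc).2 (.of_forall fun x hx => hC x (Ioc_subset_Icc_self hx)))

theorem Real.fourier_eq_integral_mul_exp (F : ℝ → ℂ) (ξ : ℝ) :
    𝓕 F ξ = ∫ y, F y * cexp (-2 * π * I * y * ξ) := by
  rw [Real.fourier_real_eq_integral_exp_smul]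
  refine integral_congr_ae (.of_forall fun y => ?_)
  dsimp only
  rw [smul_eq_mul, mul_comm]
  push_cast
  ring_nf

theorem MeasureTheory.Integrable.continuous_fourier {F : ℝ → ℂ} (hF : Integrable F) :
    Continuous (𝓕 F) :=
  VectorFourier.fourierIntegral_continuous Real.continuous_fourierChar continuous_inner hF

theorem eq_intervalIntegral_fourier_mul_exp {F : ℝ → ℂ} (hc : Continuous F) (hi : Integrable F)
    {a b : ℝ} (hab : a ≤ b) (hF : ∀ ξ ∉ Icc a b, 𝓕 F ξ = 0) (y : ℝ) :
    F y = ∫ ξ in a..b, 𝓕 F ξ * cexp (2 * π * I * ξ * y) := by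
  have hFi : Integrable (𝓕 F) :=
    hi.continuous_fourier.integrable_of_hasCompactSupport (.intro isCompact_Icc hF)
  calc F y = 𝓕⁻ (𝓕 F) y := (hi.fourierInv_fourier_eq hFi hc.continuousAt).symm
    _ = ∫ ξ : ℝ, 𝓕 F ξ * cexp (2 * π * I * ξ * y) := by
      rw [Real.fourierInv_eq_fourier_neg, Real.fourier_eq_integral_mul_exp]
      refine integral_congr_ae (.of_forall fun ξ => ?_)
      push_cast
      ring_nf
    _ = ∫ ξ in Icc a b, 𝓕 F ξ * cexp (2 * π * I * ξ * y) :=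
      (setIntegral_eq_integral_of_forall_compl_eq_zero fun ξ hξ => by rw [hF ξ hξ, zero_mul]).symm
    _ = ∫ ξ in a..b, 𝓕 F ξ * cexp (2 * π * I * ξ * y) := by
      rw [integral_Icc_eq_integral_Ioc, intervalIntegral.integral_of_le hab]

theorem ofReal_sinc_eq_intervalIntegral_exp (t : ℝ) :
    (sinc t : ℂ) = ∫ ξ in -(1/2 : ℝ)..1/2, cexp (2 * π * I * t * ξ) := by
  rcases eq_or_ne t 0 with rfl | ht
  · norm_num [sinc]
  have hc : (2 * π * I * t : ℂ) ≠ 0 := by simp [ht, pi_ne_zero, I_ne_zero]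
  rw [integral_exp_mul_complex hc, sinc, if_neg ht]
  push_cast
  rw [Complex.sin]
  field_simp
  ring_nf
  rw [I_sq]
  ring

theorem Bandlimited.fourier_eq_zero {f : ℝ → ℝ} (hf : Bandlimited f) {ξ : ℝ}
    (hξ : ξ ∉ Icc (-(1/2)) (1/2)) : 𝓕 (fun y => (f y : ℂ)) ξ = 0 := by
  obtain ⟨-, -, -, hband⟩ := hf
  rw [Real.fourier_eq_integral_mul_exp]
  refine hband ξ ?_
  rw [mem_Icc, not_and_or, not_le, not_le] at hξ
  rw [lt_abs]
  rcases hξ with h | h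
  · right; linarith
  · left; linarith

theorem fourierCoeffOn_exp_eq_sinc (hab : -(1/2 : ℝ) < 1/2) (x : ℝ) (n : ℤ) :
    fourierCoeffOn hab (fun ξ => cexp (2 * π * I * ξ * x)) n = sinc (x - n) := by
  have hlen : (1/2 : ℝ) - -(1/2) = 1 := by norm_num
  rw [fourierCoeffOn_eq_integral_exp, ofReal_sinc_eq_intervalIntegral_exp, hlen, inv_one, one_smul]
  refine intervalIntegral.integral_congr fun ξ _ => ?_
  rw [← Complex.exp_add]
  push_cast
  ring_nf

/-- Nyquist–Shannon reconstruction: a bandlimited function is reconstructed from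
its integer samples via sinc interpolation. -/
theorem nyquist_shannon_reconstruction (f : ℝ → ℝ) (hf : Bandlimited f) (x : ℝ) :
    Summable (fun n : ℤ => f n * sinc (x - n)) ∧
      f x = ∑' n : ℤ, f n * sinc (x - n) := by
  set F : ℝ → ℂ := fun y => (f y : ℂ)
  have hFi : Integrable F := hf.2.1.ofReal
  have hinv : ∀ y : ℝ, (f y : ℂ) = ∫ ξ in -(1/2 : ℝ)..1/2, 𝓕 F ξ * cexp (2 * π * I * ξ * y) :=
    eq_intervalIntegral_fourier_mul_exp (continuous_ofReal.comp hf.1) hFi (by norm_num)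
      fun ξ hξ => hf.fourier_eq_zero hξ
  have hab : -(1/2 : ℝ) < 1/2 := by norm_num
  have hlen : (1/2 : ℝ) - -(1/2) = 1 := by norm_num
  have hsamples (n : ℤ) : conj (fourierCoeffOn hab (fun ξ => conj (𝓕 F ξ)) n) = f n := by
    rw [conj_fourierCoeffOn_conj, hlen, inv_one, one_smul, hinv]
    refine intervalIntegral.integral_congr fun ξ _ => ?_
    push_cast
    ring_nf
  have hparseval := hasSum_conj_fourierCoeffOn_mul_fourierCoeffOn hab
    ((continuous_conj.comp hFi.continuous_fourier).memLp_restrict_Ioc 2 _ _)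
    ((show Continuous fun ξ : ℝ => cexp (2 * π * I * ξ * x) by fun_prop).memLp_restrict_Ioc 2 _ _)
  simp only [Function.comp_def, hsamples, fourierCoeffOn_exp_eq_sinc, conj_conj, hlen, inv_one,
    one_smul, ← hinv, ← ofReal_mul, hasSum_ofReal] at hparseval
  exact ⟨hparseval.summable, hparseval.tsum_eq.symm⟩
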